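/- For M ≥ n + 1, the number of linear dichotomies satisfies L(M, n) < 2^M; in particular, M points in general position in ℝⁿ with M ≥ n + 2 cannot be shattered by affine hyperplanes. -/
import Mathlib


def InGeneralPosition {M n : ℕ} (x : Fin M → (Fin n → ℝ)) : Prop :=
  ∀ s : Finset (Fin M), s.card ≤ n + 1 → AffineIndependent ℝ (fun i : s => x i)

def RealizableDichotomy {M n : ℕ} (x : Fin M → (Fin n → ℝ)) (y : Fin M → Bool) : Prop :=
  ∃ (w : Fin n → ℝ) (b : ℝ), ∀ i,
    (y i = true → 0 < ∑ j, w j * x i j + b) ∧ (y i = false → ∑ j, w j * x i j + b < 0)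

/-- For `M ≥ n + 1`, `L(M, n) < 2^M`; in particular, `M` points in general position
in ℝⁿ with `M ≥ n + 2` cannot be shattered by affine hyperplanes. -/
theorem cover_count_lt_two_pow {M n : ℕ} (h : n + 1 ≤ M) :
    (2 * ∑ i ∈ Finset.range n, Nat.choose (M - 1) i < 2 ^ M) ∧
    (∀ x : Fin M → (Fin n → ℝ), InGeneralPosition x → n + 2 ≤ M →
      ¬ ∀ y : Fin M → Bool, RealizableDichotomy x y) := by
  classical
  constructor
  · -- counting part
    obtain ⟨m, rfl⟩ : ∃ m, M = m + 1 := ⟨M - 1, (Nat.succ_pred_eq_of_pos (by omega)).symm⟩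
    have hnm : n ≤ m := by omega
    have hsub : ∑ i ∈ Finset.range n, Nat.choose m i ≤ ∑ i ∈ Finset.range m, Nat.choose m i :=
      Finset.sum_le_sum_of_subset (Finset.range_subset_range.2 hnm)
    have htot : ∑ i ∈ Finset.range m, Nat.choose m i + Nat.choose m m = 2 ^ m := by
      rw [← Finset.sum_range_succ]; exact Nat.sum_range_choose m
    have h1 : ∑ i ∈ Finset.range n, Nat.choose m i ≤ 2 ^ m - 1 := by
      simp only [Nat.choose_self] at htot; omega
    have h2 : (1:ℕ) ≤ 2 ^ m := Nat.one_le_two_pow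
    simp only [Nat.add_sub_cancel]
    calc 2 * ∑ i ∈ Finset.range n, Nat.choose m i ≤ 2 * (2 ^ m - 1) := by omega
      _ < 2 ^ (m + 1) := by rw [pow_succ]; omega
  · intro x _ hM hall
    -- The full family is affinely dependent since M ≥ n + 2.
    have hdep : ¬ AffineIndependent ℝ x := by
      intro hind
      have := hind.card_le_finrank_succ
      have hle : Module.finrank ℝ ↥(vectorSpan ℝ (Set.range x)) ≤
          Module.finrank ℝ (Fin n → ℝ) := Submodule.finrank_le _
      simp [Fintype.card_fin, Module.finrank_fintype_fun_eq_card] at this hle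
      omega
    obtain ⟨I, p, hpI, hpIc⟩ := Convex.radon_partition (𝕜 := ℝ) hdep
    obtain ⟨w, b, hwb⟩ := hall (fun i => decide (i ∈ I))
    set g : (Fin n → ℝ) → ℝ := fun q => ∑ j, w j * q j with hg
    have hlin : IsLinearMap ℝ g := by
      constructor
      · intro p q
        simp [hg, mul_add, Finset.sum_add_distrib]
      · intro c p
        simp [hg, Finset.mul_sum]
        exact Finset.sum_congr rfl fun j _ => by ring
    -- positive halfspace contains convexHull of x '' I
    have hpos : p ∈ {q | -b < g q} := by
      refine convexHull_min ?_ (convex_halfSpace_gt hlin (-b)) hpI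
      rintro q ⟨i, hi, rfl⟩
      have := (hwb i).1 (by simp [hi])
      simp only [Set.mem_setOf_eq]; linarith [this]
    have hneg : p ∈ {q | g q < -b} := by
      refine convexHull_min ?_ (convex_halfSpace_lt hlin (-b)) hpIc
      rintro q ⟨i, hi, rfl⟩
      have := (hwb i).2 (by simpa using hi)
      simp only [Set.mem_setOf_eq]; linarith [this]
    exact absurd hpos (by simp only [Set.mem_setOf_eq] at hneg ⊢; linarith)
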